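/- Let Ω ∈ L^s((S^{n−1})^m), s > 1, be homogeneous of degree zero, 0 < α < mn, and 0 < ε < α. Then for every x ∈ ℝⁿ and nonnegative locally integrable f₁,…,f_m, |I_{Ω,α}(f⃗)(x)| ≤ C (M_{Ω,α+ε}(f⃗)(x))^{1/2} (M_{Ω,α−ε}(f⃗)(x))^{1/2}, where C is independent of f⃗ and x. -/

import Mathlib

/-!
Split `(ℝⁿ)^m` into the dyadic shells `2^k ≤ |y⃗| < 2^(k+1)`. On the `k`-th shell the kernel
weight `|y⃗|^(α-mn)` is at most `2^(k(α-mn))`, and the reflected shell `x - y⃗` lies in `Q^m` for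
the cube `Q ∋ x` of side `2^(k+2)`; hence for every `β` the shell contributes at most
`4^(mn-β) 2^(k(α-β)) M_{Ω,β}(f⃗)(x)`. Taking `β = α + ε` on the shells with `k ≥ k₀` and
`β = α - ε` on the others leaves two geometric series, so
`I_{Ω,α}(f⃗)(x) ≲ 2^(-k₀ε) M_{Ω,α+ε}(f⃗)(x) + 2^(k₀ε) M_{Ω,α-ε}(f⃗)(x)` for every `k₀ ∈ ℤ`, and
choosing `k₀` to balance the two terms gives their geometric mean.
-/

open MeasureTheory ENNReal NNReal Set

noncomputable section

/-- Euclidean space `ℝⁿ`. -/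
abbrev En (n : ℕ) := EuclideanSpace ℝ (Fin n)

/-- The axis-parallel half-open cube with lower corner `a` and side length `h`. -/
def Cube (n : ℕ) (a : Fin n → ℝ) (h : ℝ) : Set (En n) :=
  {x | ∀ i, a i ≤ x i ∧ x i < a i + h}

/-- Conjugate exponent `p' = p/(p-1)`. -/
def rconj (p : ℝ) : ℝ := p / (p - 1)

/-- Multilinear fractional maximal operator `M_α`. -/
def MFrac (m n : ℕ) (α : ℝ) (f : Fin m → En n → ℝ) (x : En n) : ℝ≥0∞ :=
  ⨆ (a : Fin n → ℝ) (h : ℝ) (_ : 0 < h) (_ : x ∈ Cube n a h),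
    ∏ i, (volume (Cube n a h)) ^ (α / (m * n : ℝ) - 1) *
      ∫⁻ y in Cube n a h, (‖f i y‖₊ : ℝ≥0∞)

/-- Cube of the translated dyadic grid `D_β`. -/
def GridCube (n : ℕ) (β : Fin n → ℝ) (k : ℤ) (j : Fin n → ℤ) : Set (En n) :=
  Cube n (fun i => (2:ℝ) ^ (-k) * ((j i : ℝ) + (-1 : ℝ) ^ k * β i)) ((2:ℝ) ^ (-k))

/-- Multilinear fractional maximal operator restricted to the grid `D_β`. -/
def MFracGrid (m n : ℕ) (α : ℝ) (β : Fin n → ℝ) (f : Fin m → En n → ℝ) (x : En n) : ℝ≥0∞ :=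
  ⨆ (k : ℤ) (j : Fin n → ℤ) (_ : x ∈ GridCube n β k j),
    ∏ i, (volume (GridCube n β k j)) ^ (α / (m * n : ℝ) - 1) *
      ∫⁻ y in GridCube n β k j, (‖f i y‖₊ : ℝ≥0∞)

/-- The multiple weight constant `[ω]_{A_{(P,q)}}` (all `p i > 1`). -/
def Apq (m n : ℕ) (p : Fin m → ℝ) (q : ℝ) (ω : Fin m → En n → ℝ≥0∞) : ℝ≥0∞ :=
  ⨆ (a : Fin n → ℝ) (h : ℝ) (_ : 0 < h),
    ((volume (Cube n a h))⁻¹ * ∫⁻ x in Cube n a h, (∏ i, ω i x) ^ q) *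
      ∏ i, ((volume (Cube n a h))⁻¹ *
        ∫⁻ x in Cube n a h, ω i x ^ (-(rconj (p i)))) ^ (q / rconj (p i))

/-- Hardy–Littlewood maximal operator (over cubes). -/
def HLMax (n : ℕ) (g : En n → ℝ≥0∞) (x : En n) : ℝ≥0∞ :=
  ⨆ (a : Fin n → ℝ) (h : ℝ) (_ : 0 < h) (_ : x ∈ Cube n a h),
    (volume (Cube n a h))⁻¹ * ∫⁻ y in Cube n a h, g y

/-- The Fujii–Wilson `A_∞` constant. -/
def AInfty (n : ℕ) (w : En n → ℝ≥0∞) : ℝ≥0∞ :=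
  ⨆ (a : Fin n → ℝ) (h : ℝ) (_ : 0 < h),
    (∫⁻ x in Cube n a h, w x)⁻¹ *
      ∫⁻ x in Cube n a h, HLMax n ((Cube n a h).indicator w) x

/-- Weighted `L^p` "norm" `(∫ F^p w)^{1/p}` for `ℝ≥0∞`-valued `F`. -/
def wnorm (n : ℕ) (p : ℝ) (w : En n → ℝ≥0∞) (F : En n → ℝ≥0∞) : ℝ≥0∞ :=
  (∫⁻ x, F x ^ p * w x) ^ (1 / p)

/-- Multilinear fractional maximal operator with rough homogeneous kernel `Ω`. -/
def MOmega (m n : ℕ) (α : ℝ) (Ω : (Fin m → En n) → ℝ) (f : Fin m → En n → ℝ)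
    (x : En n) : ℝ≥0∞ :=
  ⨆ (a : Fin n → ℝ) (h : ℝ) (_ : 0 < h) (_ : x ∈ Cube n a h),
    (volume (Cube n a h)) ^ (α / (n : ℝ) - m) *
      ∫⁻ y in univ.pi (fun _ : Fin m => Cube n a h),
        (‖Ω (fun i => x - y i)‖₊ : ℝ≥0∞) * ∏ i, (‖f i (y i)‖₊ : ℝ≥0∞)

/-- The `L^s((S^{n-1})^m)` norm of a (degree-zero homogeneous) kernel, realized through the
cone measure on the product of unit spheres. -/
def sphereNorm (m n : ℕ) (s : ℝ) (Ω : (Fin m → En n) → ℝ) : ℝ≥0∞ :=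
  eLpNorm Ω (ENNReal.ofReal s)
    (Measure.map (fun (y : Fin m → En n) (i : Fin m) => ‖y i‖⁻¹ • y i)
      (((n : ℝ≥0∞) ^ m) • volume.restrict (univ.pi fun _ : Fin m => Metric.ball (0 : En n) 1)))

/-- Euclidean norm of `(y₁, …, y_m) ∈ (ℝⁿ)^m`. -/
def bigNorm (m n : ℕ) (y : Fin m → En n) : ℝ := Real.sqrt (∑ i, ‖y i‖ ^ 2)

/-- Multilinear fractional integral with rough homogeneous kernel (absolute values). -/
def IOmega (m n : ℕ) (α : ℝ) (Ω : (Fin m → En n) → ℝ) (f : Fin m → En n → ℝ)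
    (x : En n) : ℝ≥0∞ :=
  ∫⁻ y : Fin m → En n,
    ENNReal.ofReal (bigNorm m n y ^ (α - (m * n : ℝ))) * (‖Ω y‖₊ : ℝ≥0∞) *
      ∏ i, (‖f i (x - y i)‖₊ : ℝ≥0∞)

/-- Standard dyadic cube `2^{-k}([0,1)^n + j)`. -/
def DyadicCube (n : ℕ) (k : ℤ) (j : Fin n → ℤ) : Set (En n) :=
  Cube n (fun i => (j i : ℝ) * (2:ℝ) ^ (-k)) ((2:ℝ) ^ (-k))

def IsDyadic (n : ℕ) (S : Set (En n)) : Prop := ∃ k j, S = DyadicCube n k j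

/-- The product of fractional averages `∏_i |S|^{α/(mn)-1} ∫_S |f_i|`. -/
def dyadAvg (m n : ℕ) (α : ℝ) (f : Fin m → En n → ℝ) (S : Set (En n)) : ℝ≥0∞ :=
  ∏ i, (volume S) ^ (α / (m * n : ℝ) - 1) * ∫⁻ y in S, (‖f i y‖₊ : ℝ≥0∞)

/-- Dyadic multilinear fractional maximal operator `M_α^d`. -/
def MFracDyadic (m n : ℕ) (α : ℝ) (f : Fin m → En n → ℝ) (x : En n) : ℝ≥0∞ :=
  ⨆ (k : ℤ) (j : Fin n → ℤ) (_ : x ∈ DyadicCube n k j), dyadAvg m n α f (DyadicCube n k j)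

/-- A maximal (Calderón–Zygmund) dyadic cube of the level set at height `t`. -/
def IsCZCube (m n : ℕ) (α : ℝ) (f : Fin m → En n → ℝ) (t : ℝ≥0∞) (S : Set (En n)) : Prop :=
  IsDyadic n S ∧ t < dyadAvg m n α f S ∧
    ∀ S', IsDyadic n S' → S ⊂ S' → ¬ t < dyadAvg m n α f S'

/-- The multiple weight constant `[ω]_{A_{P}}` of Lerner–Ombrosi–Pérez–Torres–Trujillo. -/
def ApVec (m n : ℕ) (p : Fin m → ℝ) (pp : ℝ) (ω : Fin m → En n → ℝ≥0∞) : ℝ≥0∞ :=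
  ⨆ (a : Fin n → ℝ) (h : ℝ) (_ : 0 < h),
    (∏ i, ((volume (Cube n a h))⁻¹ *
        ∫⁻ x in Cube n a h, ω i x ^ (1 - rconj (p i))) ^ (pp / rconj (p i))) *
      ((volume (Cube n a h))⁻¹ * ∫⁻ x in Cube n a h, ∏ i, ω i x ^ (pp / p i))

/-- `X`-average `‖g‖_{X,Q} = ‖τ_{ℓ(Q)}(g χ_Q)‖_X` of `g` over the cube `Q = Q(a,h)`,
for an abstract Banach-function-space norm functional `N`. -/
def Xavg (n : ℕ) (N : (En n → ℝ≥0∞) → ℝ≥0∞) (a : Fin n → ℝ) (h : ℝ)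
    (g : En n → ℝ≥0∞) : ℝ≥0∞ :=
  N (fun x => (Cube n a h).indicator g (h • x))

/-- Maximal operator `M_X` associated with the norm functional `N`. -/
def MX (n : ℕ) (N : (En n → ℝ≥0∞) → ℝ≥0∞) (g : En n → ℝ≥0∞) (x : En n) : ℝ≥0∞ :=
  ⨆ (a : Fin n → ℝ) (h : ℝ) (_ : 0 < h) (_ : x ∈ Cube n a h), Xavg n N a h g

/-- Weighted fractional maximal operator `M_{σ,α/m}`. -/
def MWFrac (n m : ℕ) (α : ℝ) (σ : En n → ℝ≥0∞) (f : En n → ℝ) (x : En n) : ℝ≥0∞ :=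
  ⨆ (a : Fin n → ℝ) (h : ℝ) (_ : 0 < h) (_ : x ∈ Cube n a h),
    (∫⁻ y in Cube n a h, σ y) ^ (α / (m * n : ℝ) - 1) *
      ∫⁻ y in Cube n a h, (‖f y‖₊ : ℝ≥0∞) * σ y

/-- The reverse Hölder exponent `r(w) = 1 + 1/(c_n [w]_{A_∞})`. -/
def rExp (n : ℕ) (A : ℝ) : ℝ := 1 + 1 / ((2:ℝ) ^ (11 + n) * A)

end


open Function

lemma pairwise_disjoint_Ico_zpow_of_one_le {b : ℝ} (hb : 1 ≤ b) :
    Pairwise (Disjoint on fun k : ℤ => Ico (b ^ k) (b ^ (k + 1))) := by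
  intro k l hkl
  wlog hlt : k < l generalizing k l
  · exact (this hkl.symm (by omega)).symm
  exact Set.Ico_disjoint_Ico.2 ((min_le_left _ _).trans
    ((zpow_le_zpow_right₀ hb (by omega)).trans (le_max_right _ _)))

lemma tsum_ofReal_zpow_natCast_add {r : ℝ} (hr : 0 < r) (k₀ : ℤ) :
    ∑' j : ℕ, ENNReal.ofReal (r ^ ((j : ℤ) + k₀)) =
      ENNReal.ofReal (r ^ k₀) * (1 - ENNReal.ofReal r)⁻¹ := by
  simp_rw [zpow_add₀ hr.ne', zpow_natCast, ENNReal.ofReal_mul (pow_nonneg hr.le _),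
    ENNReal.ofReal_pow hr.le]
  rw [ENNReal.tsum_mul_right, ENNReal.tsum_geometric, mul_comm]

lemma exists_zpow_mul_le_sqrt {r a b : ℝ} (hr0 : 0 < r) (hr1 : r < 1) (ha : 0 < a) (hb : 0 < b) :
    ∃ k : ℤ, r ^ k * a ≤ √(a * b) ∧ r ^ (1 - k) * b ≤ √(a * b) := by
  set s := (r ^ 2)⁻¹
  obtain ⟨k, hlo, hhi⟩ := exists_mem_Ioc_zpow (div_pos hb ha)
    ((one_lt_inv₀ (pow_pos hr0 2)).2 (pow_lt_one₀ hr0.le hr1 two_ne_zero) : 1 < s)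
  have hsq : ∀ l : ℤ, (r ^ l) ^ 2 = s ^ (-l) := fun l => by
    rw [inv_zpow', neg_neg, ← zpow_natCast, ← zpow_natCast, ← zpow_mul, ← zpow_mul, mul_comm]
  refine ⟨-k, ?_, ?_⟩ <;> rw [Real.le_sqrt (by positivity) (by positivity), mul_pow, hsq]
  · rw [neg_neg]
    nlinarith [(lt_div_iff₀ ha).1 hlo]
  · have h : (s ^ (k + 1))⁻¹ * b ≤ a := by
      rw [inv_mul_le_iff₀ (by positivity)]
      exact (div_le_iff₀ ha).1 hhi
    rw [show -(1 - -k) = -(k + 1) by ring, zpow_neg]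
    nlinarith

lemma ENNReal.le_two_mul_sqrt_of_forall_zpow {I C A B : ℝ≥0∞} {r : ℝ} (hr0 : 0 < r)
    (hr1 : r < 1) (hAB : A = 0 ↔ B = 0)
    (h : ∀ k : ℤ, I ≤ C * (ENNReal.ofReal (r ^ k) * A + ENNReal.ofReal (r ^ (1 - k)) * B)) :
    I ≤ 2 * C * A ^ (1 / 2 : ℝ) * B ^ (1 / 2 : ℝ) := by
  rcases eq_or_ne A 0 with hA | hA
  · simpa [hA, hAB.1 hA] using h 0
  have hB : B ≠ 0 := fun hB => hA (hAB.2 hB)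
  rcases eq_or_ne C 0 with hC | hC
  · simpa [hC] using h 0
  by_cases hinf : A = ⊤ ∨ B = ⊤
  · have : A ^ (1 / 2 : ℝ) * B ^ (1 / 2 : ℝ) = ⊤ := by
      rcases hinf with hinf | hinf <;> simp [hinf, hA, hB]
    rw [mul_assoc, this, ENNReal.mul_top (mul_ne_zero two_ne_zero hC)]
    exact le_top
  push Not at hinf
  obtain ⟨k, hk₁, hk₂⟩ := exists_zpow_mul_le_sqrt hr0 hr1
    (ENNReal.toReal_pos hA hinf.1) (ENNReal.toReal_pos hB hinf.2)
  have hsqrt : ENNReal.ofReal √(A.toReal * B.toReal) = A ^ (1 / 2 : ℝ) * B ^ (1 / 2 : ℝ) := by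
    rw [Real.sqrt_eq_rpow, ← ENNReal.ofReal_rpow_of_nonneg (by positivity) (by norm_num),
      ENNReal.ofReal_mul ENNReal.toReal_nonneg, ENNReal.ofReal_toReal hinf.1,
      ENNReal.ofReal_toReal hinf.2, ENNReal.mul_rpow_of_nonneg _ _ (by norm_num)]
  have hle : ∀ {t : ℝ} {X : ℝ≥0∞}, X ≠ ⊤ → t * X.toReal ≤ √(A.toReal * B.toReal) →
      ENNReal.ofReal t * X ≤ A ^ (1 / 2 : ℝ) * B ^ (1 / 2 : ℝ) := fun hX ht => by
    rw [← hsqrt, ← ENNReal.ofReal_toReal hX, ← ENNReal.ofReal_mul' ENNReal.toReal_nonneg]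
    exact ENNReal.ofReal_le_ofReal ht
  calc I ≤ C * (ENNReal.ofReal (r ^ k) * A + ENNReal.ofReal (r ^ (1 - k)) * B) := h k
    _ ≤ C * (A ^ (1 / 2 : ℝ) * B ^ (1 / 2 : ℝ) + A ^ (1 / 2 : ℝ) * B ^ (1 / 2 : ℝ)) := by
        gcongr C * (?_ + ?_)
        exacts [hle hinf.1 hk₁, hle hinf.2 hk₂]
    _ = _ := by ring

section BigNorm

variable {m n : ℕ}

lemma norm_le_bigNorm (y : Fin m → En n) (i : Fin m) : ‖y i‖ ≤ bigNorm m n y := by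
  rw [bigNorm, ← Real.sqrt_sq (norm_nonneg (y i))]
  exact Real.sqrt_le_sqrt
    (Finset.single_le_sum (f := fun i => ‖y i‖ ^ 2) (fun _ _ => sq_nonneg _) (Finset.mem_univ i))

lemma abs_apply_le_bigNorm (y : Fin m → En n) (i : Fin m) (j : Fin n) :
    |y i j| ≤ bigNorm m n y :=
  (PiLp.norm_apply_le (y i) j).trans (norm_le_bigNorm y i)

lemma measurable_bigNorm : Measurable (bigNorm m n) := by
  unfold bigNorm; fun_prop

def dyadicShell (m n : ℕ) (k : ℤ) : Set (Fin m → En n) :=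
  bigNorm m n ⁻¹' Ico (2 ^ k) (2 ^ (k + 1))

lemma measurableSet_dyadicShell (k : ℤ) : MeasurableSet (dyadicShell m n k) :=
  measurable_bigNorm measurableSet_Ico

lemma pairwise_disjoint_dyadicShell : Pairwise (Disjoint on (dyadicShell m n)) :=
  fun _ _ hkl => (pairwise_disjoint_Ico_zpow_of_one_le one_le_two hkl).preimage _

lemma iUnion_dyadicShell : ⋃ k, dyadicShell m n k = {y | 0 < bigNorm m n y} := by
  ext y
  simp only [dyadicShell, mem_iUnion, mem_preimage, mem_ofPred_eq]
  refine ⟨fun ⟨k, hk⟩ => (zpow_pos two_pos k).trans_le hk.1, fun hy => ?_⟩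
  exact exists_mem_Ico_zpow hy one_lt_two

end BigNorm

section Cube

variable {n : ℕ}

lemma cube_eq_preimage (a : Fin n → ℝ) (h : ℝ) :
    Cube n a h =
      (MeasurableEquiv.toLp 2 (Fin n → ℝ)).symm ⁻¹' univ.pi fun i => Ico (a i) (a i + h) := by
  ext y
  simp [Cube, Set.mem_pi]

lemma measurableSet_cube (a : Fin n → ℝ) (h : ℝ) : MeasurableSet (Cube n a h) := by
  rw [cube_eq_preimage]
  exact (MeasurableEquiv.toLp 2 (Fin n → ℝ)).symm.measurable
    (MeasurableSet.univ_pi fun _ => measurableSet_Ico)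

lemma volume_cube (a : Fin n → ℝ) (h : ℝ) : volume (Cube n a h) = ENNReal.ofReal h ^ n := by
  rw [cube_eq_preimage, (EuclideanSpace.volume_preserving_symm_measurableEquiv_toLp
    (Fin n)).measure_preimage (MeasurableSet.univ_pi fun _ => measurableSet_Ico).nullMeasurableSet,
    volume_pi_pi]
  simp [Real.volume_Ico]

lemma volume_cube_rpow (hn : 0 < n) (a : Fin n → ℝ) {h : ℝ} (hh : 0 < h) (m : ℕ) (β : ℝ) :
    volume (Cube n a h) ^ (β / n - m) = ENNReal.ofReal (h ^ (β - m * n)) := by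
  rw [volume_cube, ← ENNReal.ofReal_pow hh.le, ENNReal.ofReal_rpow_of_pos (pow_pos hh n),
    ← Real.rpow_natCast, ← Real.rpow_mul hh.le]
  congr 2
  field_simp

lemma sub_mem_cube_of_abs_lt {ρ : ℝ} {x v : En n} (hv : ∀ j, |v j| < ρ) :
    x - v ∈ Cube n (fun j => x j - ρ) (2 * ρ) := by
  intro j
  have := abs_lt.1 (hv j)
  simp only [PiLp.sub_apply]
  constructor <;> linarith

end Cube

noncomputable def MOmegaIntegrand (m n : ℕ) (Ω : (Fin m → En n) → ℝ) (f : Fin m → En n → ℝ)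
    (x : En n) (z : Fin m → En n) : ℝ≥0∞ :=
  ‖Ω (fun i => x - z i)‖₊ * ∏ i, (‖f i (z i)‖₊ : ℝ≥0∞)

noncomputable def IOmegaIntegrand (m n : ℕ) (α : ℝ) (Ω : (Fin m → En n) → ℝ)
    (f : Fin m → En n → ℝ) (x : En n) (y : Fin m → En n) : ℝ≥0∞ :=
  ENNReal.ofReal (bigNorm m n y ^ (α - (m * n : ℝ))) * (‖Ω y‖₊ : ℝ≥0∞) *
    ∏ i, (‖f i (x - y i)‖₊ : ℝ≥0∞)

section Estimates

variable {m n : ℕ} (Ω : (Fin m → En n) → ℝ) (f : Fin m → En n → ℝ) (x : En n)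

lemma le_MOmega (β : ℝ) {a : Fin n → ℝ} {h : ℝ} (hh : 0 < h) (hx : x ∈ Cube n a h) :
    volume (Cube n a h) ^ (β / n - m) *
        ∫⁻ z in univ.pi fun _ => Cube n a h, MOmegaIntegrand m n Ω f x z ≤
      MOmega m n β Ω f x :=
  le_iSup₂_of_le a h (le_iSup₂_of_le hh hx le_rfl)

lemma MOmega_eq_zero_iff (β : ℝ) :
    MOmega m n β Ω f x = 0 ↔ ∀ (a : Fin n → ℝ) (h : ℝ), 0 < h → x ∈ Cube n a h →
      ∫⁻ z in univ.pi fun _ => Cube n a h, MOmegaIntegrand m n Ω f x z = 0 := by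
  simp only [MOmega, ENNReal.iSup_eq_zero, mul_eq_zero, ENNReal.rpow_eq_zero_iff, volume_cube]
  refine forall₂_congr fun a h => forall₂_congr fun hh _ => ?_
  have : ENNReal.ofReal h ^ n ≠ 0 := pow_ne_zero _ (ENNReal.ofReal_pos.2 hh).ne'
  simp [this, MOmegaIntegrand]

lemma setLIntegral_bigNorm_lt_le (hn : 0 < n) (β : ℝ) {ρ : ℝ} (hρ : 0 < ρ) :
    ∫⁻ y in {y | bigNorm m n y < ρ}, (‖Ω y‖₊ : ℝ≥0∞) * ∏ i, (‖f i (x - y i)‖₊ : ℝ≥0∞) ≤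
      ENNReal.ofReal ((2 * ρ) ^ (m * n - β)) * MOmega m n β Ω f x := by
  set Q := Cube n (fun j => x j - ρ) (2 * ρ)
  set reflect : (Fin m → En n) → (Fin m → En n) := fun y i => x - y i
  have hx : x ∈ Q := by
    simpa using sub_mem_cube_of_abs_lt (x := x) (v := 0) fun _ => by simpa using hρ
  have hsub : {y | bigNorm m n y < ρ} ⊆ reflect ⁻¹' univ.pi fun _ => Q :=
    fun y hy i _ => sub_mem_cube_of_abs_lt fun j => (abs_apply_le_bigNorm y i j).trans_lt hy
  have hvol : ENNReal.ofReal ((2 * ρ) ^ (m * n - β)) * volume Q ^ (β / n - m) = 1 := by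
    rw [volume_cube_rpow hn _ (by positivity), ← ENNReal.ofReal_mul (by positivity),
      ← Real.rpow_add (by positivity)]
    simp
  calc _ ≤ ∫⁻ y in reflect ⁻¹' univ.pi fun _ => Q, MOmegaIntegrand m n Ω f x (reflect y) := by
        simpa [reflect, MOmegaIntegrand] using lintegral_mono_set hsub
    _ = ∫⁻ z in univ.pi fun _ => Q, MOmegaIntegrand m n Ω f x z :=
        (volume_preserving_pi fun _ => Measure.measurePreserving_sub_left volume x)
          |>.setLIntegral_comp_preimage_emb (measurableEmbedding_subLeft fun _ => x) _ _
    _ = ENNReal.ofReal ((2 * ρ) ^ (m * n - β)) *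
          (volume Q ^ (β / n - m) * ∫⁻ z in univ.pi fun _ => Q, MOmegaIntegrand m n Ω f x z) := by
        rw [← mul_assoc, hvol, one_mul]
    _ ≤ _ := by gcongr; exact le_MOmega Ω f x β (by positivity) hx

lemma setLIntegral_dyadicShell_le (hn : 0 < n) {α : ℝ} (hα : α ≤ m * n) (β : ℝ) (k : ℤ) :
    ∫⁻ y in dyadicShell m n k, IOmegaIntegrand m n α Ω f x y ≤
      ENNReal.ofReal (4 ^ (m * n - β)) * ENNReal.ofReal ((2 ^ (α - β)) ^ k) *
        MOmega m n β Ω f x := by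
  set ρ : ℝ := 2 ^ k
  have hρ : 0 < ρ := zpow_pos two_pos k
  have hkernel : ∀ y ∈ dyadicShell m n k, IOmegaIntegrand m n α Ω f x y ≤
      ENNReal.ofReal (ρ ^ (α - m * n)) * ((‖Ω y‖₊ : ℝ≥0∞) * ∏ i, (‖f i (x - y i)‖₊ : ℝ≥0∞)) :=
    fun y hy => by
      rw [IOmegaIntegrand, mul_assoc]
      gcongr ENNReal.ofReal ?_ * _
      exact Real.rpow_le_rpow_of_nonpos hρ hy.1 (by linarith)
  have hsub : dyadicShell m n k ⊆ {y | bigNorm m n y < 2 * ρ} := fun y hy => by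
    simpa [ρ, zpow_add_one₀, mul_comm] using hy.2
  have hconst : ρ ^ (α - m * n) * (2 * (2 * ρ)) ^ (m * n - β) =
      4 ^ (m * n - β) * (2 ^ (α - β)) ^ k := by
    rw [Real.rpow_zpow_comm two_pos.le, ← mul_assoc, Real.mul_rpow (by norm_num) hρ.le,
      mul_left_comm, ← Real.rpow_add hρ]
    norm_num [ρ]
  calc _ ≤ ∫⁻ y in dyadicShell m n k, ENNReal.ofReal (ρ ^ (α - m * n)) *
          ((‖Ω y‖₊ : ℝ≥0∞) * ∏ i, (‖f i (x - y i)‖₊ : ℝ≥0∞)) :=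
        setLIntegral_mono' (measurableSet_dyadicShell k) hkernel
    _ = ENNReal.ofReal (ρ ^ (α - m * n)) * ∫⁻ y in dyadicShell m n k,
          (‖Ω y‖₊ : ℝ≥0∞) * ∏ i, (‖f i (x - y i)‖₊ : ℝ≥0∞) :=
        lintegral_const_mul' _ _ ENNReal.ofReal_ne_top
    _ ≤ ENNReal.ofReal (ρ ^ (α - m * n)) *
          (ENNReal.ofReal ((2 * (2 * ρ)) ^ (m * n - β)) * MOmega m n β Ω f x) := by
        gcongr
        exact (lintegral_mono_set hsub).trans
          (setLIntegral_bigNorm_lt_le Ω f x hn β (by positivity))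
    _ = _ := by
        rw [← mul_assoc, ← ENNReal.ofReal_mul (by positivity), hconst,
          ENNReal.ofReal_mul (by positivity)]

lemma IOmega_eq_tsum_dyadicShell {α : ℝ} (hα : α < m * n) :
    IOmega m n α Ω f x = ∑' k : ℤ, ∫⁻ y in dyadicShell m n k, IOmegaIntegrand m n α Ω f x y := by
  have hsupp : support (IOmegaIntegrand m n α Ω f x) ⊆ ⋃ k, dyadicShell m n k := by
    rw [iUnion_dyadicShell]
    refine fun y hy => (Real.sqrt_nonneg _).lt_of_ne fun h => hy ?_
    have hy0 : bigNorm m n y = 0 := h.symm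
    simp [IOmegaIntegrand, hy0, Real.zero_rpow (sub_ne_zero.2 hα.ne)]
  rw [← lintegral_iUnion measurableSet_dyadicShell pairwise_disjoint_dyadicShell,
    setLIntegral_eq_of_support_subset hsupp]
  rfl

lemma IOmega_le_geometric_split (hn : 0 < n) {α ε : ℝ} (hα : α < m * n) (hε : 0 ≤ ε) (k₀ : ℤ) :
    IOmega m n α Ω f x ≤
      ENNReal.ofReal (4 ^ (m * n - α + ε)) * (1 - ENNReal.ofReal (2 ^ (-ε)))⁻¹ *
        (ENNReal.ofReal ((2 ^ (-ε)) ^ k₀) * MOmega m n (α + ε) Ω f x +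
          ENNReal.ofReal ((2 ^ (-ε)) ^ (1 - k₀)) * MOmega m n (α - ε) Ω f x) := by
  set r : ℝ := 2 ^ (-ε)
  have hr : 0 < r := by positivity
  have hrinv : r⁻¹ = 2 ^ ε := by simp only [r, Real.rpow_neg zero_le_two, inv_inv]
  set D := ENNReal.ofReal (4 ^ (m * n - α + ε))
  set S : ℤ → ℝ≥0∞ := fun k => ∫⁻ y in dyadicShell m n k, IOmegaIntegrand m n α Ω f x y
  have hlarge : ∀ k, S k ≤ D * ENNReal.ofReal (r ^ k) * MOmega m n (α + ε) Ω f x := by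
    intro k
    refine (setLIntegral_dyadicShell_le Ω f x hn hα.le (α + ε) k).trans ?_
    rw [show α - (α + ε) = -ε by ring]
    gcongr ?_ * _ * _
    exact ENNReal.ofReal_le_ofReal (Real.rpow_le_rpow_of_exponent_le (by norm_num) (by linarith))
  have hsmall : ∀ k, S k ≤ D * ENNReal.ofReal (r ^ (-k)) * MOmega m n (α - ε) Ω f x := by
    intro k
    refine (setLIntegral_dyadicShell_le Ω f x hn hα.le (α - ε) k).trans_eq ?_
    rw [show α - (α - ε) = ε by ring, show (m * n : ℝ) - (α - ε) = m * n - α + ε by ring,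
      zpow_neg, ← inv_zpow, hrinv]
  calc IOmega m n α Ω f x = ∑' k, S k := IOmega_eq_tsum_dyadicShell Ω f x hα
    _ = ∑' k, S (k + k₀) := ((Equiv.addRight k₀).tsum_eq S).symm
    _ = ∑' j : ℕ, S (j + k₀) + ∑' j : ℕ, S (-(j + 1) + k₀) :=
        tsum_of_nat_of_neg_add_one ENNReal.summable ENNReal.summable
    _ ≤ ∑' j : ℕ, D * ENNReal.ofReal (r ^ ((j : ℤ) + k₀)) * MOmega m n (α + ε) Ω f x +
          ∑' j : ℕ, D * ENNReal.ofReal (r ^ ((j : ℤ) + (1 - k₀))) * MOmega m n (α - ε) Ω f x := by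
        gcongr with j j
        · exact hlarge _
        · exact (hsmall _).trans_eq (by ring_nf)
    _ = _ := by
        rw [ENNReal.tsum_mul_right, ENNReal.tsum_mul_right, ENNReal.tsum_mul_left,
          ENNReal.tsum_mul_left, tsum_ofReal_zpow_natCast_add hr, tsum_ofReal_zpow_natCast_add hr]
        ring

end Estimates

theorem statement_11_general (m n : ℕ) (hn : 0 < n)
    (Ω : (Fin m → En n) → ℝ)
    (α ε : ℝ) (hα' : α < m * n) (hε : 0 < ε) :
    ∃ C : ℝ≥0, 0 < C ∧ ∀ (f : Fin m → En n → ℝ),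
      (∀ i x, 0 ≤ f i x) → (∀ i, MeasureTheory.LocallyIntegrable (f i) volume) →
      ∀ x : En n,
        IOmega m n α Ω f x ≤
          (C : ℝ≥0∞) * (MOmega m n (α + ε) Ω f x) ^ ((1:ℝ)/2) *
            (MOmega m n (α - ε) Ω f x) ^ ((1:ℝ)/2) := by
  set r : ℝ := 2 ^ (-ε)
  have hr1 : r < 1 := Real.rpow_lt_one_of_one_lt_of_neg one_lt_two (neg_neg_of_pos hε)
  set C : ℝ≥0∞ := 2 * (ENNReal.ofReal (4 ^ (m * n - α + ε)) * (1 - ENNReal.ofReal r)⁻¹)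
  have hC : C ≠ ⊤ := by
    have : ENNReal.ofReal r < 1 := ENNReal.ofReal_lt_one.2 hr1
    simp [C, ENNReal.mul_eq_top, ENNReal.inv_eq_top, tsub_eq_zero_iff_le, this.not_ge]
  have hC₀ : C ≠ 0 := by simp [C, Real.rpow_pos_of_pos four_pos]
  refine ⟨C.toNNReal, ENNReal.toNNReal_pos hC₀ hC, fun f _ _ x => ?_⟩
  rw [ENNReal.coe_toNNReal hC]
  exact ENNReal.le_two_mul_sqrt_of_forall_zpow (by positivity) hr1
    ((MOmega_eq_zero_iff Ω f x _).trans (MOmega_eq_zero_iff Ω f x _).symm)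
    (IOmega_le_geometric_split Ω f x hn hα' hε.le)

/-- pointwise estimate
`|I_{Ω,α}(f⃗)(x)| ≤ C (M_{Ω,α+ε}(f⃗)(x))^{1/2} (M_{Ω,α-ε}(f⃗)(x))^{1/2}`. -/
theorem statement_11 (m n : ℕ) (hm : 0 < m) (hn : 0 < n) (s : ℝ) (hs : 1 < s)
    (Ω : (Fin m → En n) → ℝ) (hΩm : Measurable Ω)
    (hΩhom : ∀ c : ℝ, 0 < c → ∀ y, Ω (fun i => c • y i) = Ω y)
    (α ε : ℝ) (hα : 0 < α) (hα' : α < m * n) (hε : 0 < ε) (hεα : ε < α) :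
    ∃ C : ℝ≥0, 0 < C ∧ ∀ (f : Fin m → En n → ℝ),
      (∀ i x, 0 ≤ f i x) → (∀ i, MeasureTheory.LocallyIntegrable (f i) volume) →
      ∀ x : En n,
        IOmega m n α Ω f x ≤
          (C : ℝ≥0∞) * (MOmega m n (α + ε) Ω f x) ^ ((1:ℝ)/2) *
            (MOmega m n (α - ε) Ω f x) ^ ((1:ℝ)/2) :=
  statement_11_general m n hn Ω α ε hα' hε
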